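/- Assume the reverse Loewner flow setup. Then Y is nondecreasing and, for every s ∈ [0,t], X(s)·Y(s) = y·β(s) + ∫_{[0,s]} (β(s) − β(r)) dμ_Y(r), where μ_Y denotes the Lebesgue–Stieltjes measure associated with the nondecreasing continuous function Y. -/

import Mathlib

/-!
Write `f = 2X/(X² + Y²)` and `g = 2Y/(X² + Y²)`, so that `X = β - ∫ f` and `Y = y + ∫ g` with
`g ≥ 0`. Hence `Y` is nondecreasing and its Lebesgue–Stieltjes measure has density `g` on `[0, s]`.
The identity `f·Y = X·g` is the cancellation behind `d(XY) = Y dβ`: the product rule for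
`A = ∫ f` and `Y` gives `A(s)·Y(s) = ∫₀ˢ (f Y + A g) = ∫₀ˢ β g`, so
`X(s)·Y(s) = β(s)·Y(s) - ∫₀ˢ β g = y·β(s) + ∫₀ˢ (β(s) - β(r)) g(r) dr`.
-/

open Set MeasureTheory intervalIntegral

section Primitive

variable {u u' : ℝ → ℝ} {a b c : ℝ}

theorem continuousOn_of_eq_add_integral (hu' : ContinuousOn u' (Icc a b))
    (hu : ∀ x ∈ Icc a b, u x = c + ∫ r in a..x, u' r) : ContinuousOn u (Icc a b) := by
  rcases le_or_gt a b with hab | hab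
  · rw [← uIcc_of_le hab] at hu' ⊢
    refine ((continuousOn_primitive_interval (hu'.integrableOn_compact isCompact_uIcc)).const_add
      c).congr fun x hx => hu x ?_
    rwa [← uIcc_of_le hab]
  · simp [Icc_eq_empty_of_lt hab]

theorem hasDerivAt_of_eq_add_integral (hu' : ContinuousOn u' (Icc a b))
    (hu : ∀ x ∈ Icc a b, u x = c + ∫ r in a..x, u' r) {x : ℝ} (hx : x ∈ Ioo a b) :
    HasDerivAt u (u' x) x := by
  have hint : IntervalIntegrable u' volume a x := by
    refine (hu'.mono ?_).intervalIntegrable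
    rw [uIcc_of_le hx.1.le]
    exact Icc_subset_Icc_right hx.2.le
  have hderiv := (integral_hasDerivAt_right hint
    ((hu'.mono Ioo_subset_Icc_self).stronglyMeasurableAtFilter isOpen_Ioo x hx)
    (hu'.continuousAt (Icc_mem_nhds hx.1 hx.2))).const_add c
  exact hderiv.congr_of_eventuallyEq (Filter.eventually_of_mem (Icc_mem_nhds hx.1 hx.2) hu)

theorem monotoneOn_of_eq_add_integral (hu' : ContinuousOn u' (Icc a b))
    (hu'0 : ∀ x ∈ Icc a b, 0 ≤ u' x) (hu : ∀ x ∈ Icc a b, u x = c + ∫ r in a..x, u' r) :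
    MonotoneOn u (Icc a b) := by
  refine monotoneOn_of_hasDerivWithinAt_nonneg (f' := u') (convex_Icc a b)
    (continuousOn_of_eq_add_integral hu' hu) (fun x hx => ?_) (fun x hx => ?_)
  · rw [interior_Icc] at hx ⊢
    exact (hasDerivAt_of_eq_add_integral hu' hu hx).hasDerivWithinAt
  · exact hu'0 x (interior_subset hx)

theorem integral_mul_add_mul_eq_of_eq_add_integral {v v' : ℝ → ℝ} {d : ℝ} (hab : a ≤ b)
    (hu' : ContinuousOn u' (Icc a b)) (hv' : ContinuousOn v' (Icc a b))
    (hu : ∀ x ∈ Icc a b, u x = c + ∫ r in a..x, u' r)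
    (hv : ∀ x ∈ Icc a b, v x = d + ∫ r in a..x, v' r) :
    ∫ x in a..b, u' x * v x + u x * v' x = u b * v b - c * d := by
  have ha : a ∈ Icc a b := left_mem_Icc.2 hab
  have hIoo : Ioo (min a b) (max a b) = Ioo a b := by rw [min_eq_left hab, max_eq_right hab]
  have h := integral_deriv_mul_eq_sub_of_hasDerivAt
    (uIcc_of_le hab ▸ continuousOn_of_eq_add_integral hu' hu)
    (uIcc_of_le hab ▸ continuousOn_of_eq_add_integral hv' hv)
    (hIoo ▸ fun x hx => hasDerivAt_of_eq_add_integral hu' hu hx)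
    (hIoo ▸ fun x hx => hasDerivAt_of_eq_add_integral hv' hv hx)
    (hu'.intervalIntegrable_of_Icc hab) (hv'.intervalIntegrable_of_Icc hab)
  rwa [hu a ha, hv a ha, integral_same, integral_same, add_zero, add_zero] at h

end Primitive

theorem MeasureTheory.Measure.restrict_Icc_eq_of_measure_Icc_eq {μ ν : Measure ℝ} {a b : ℝ}
    (hab : a ≤ b) (hμb : μ (Icc a b) ≠ ⊤) (h : ∀ m ∈ Icc a b, μ (Icc a m) = ν (Icc a m)) :
    μ.restrict (Icc a b) = ν.restrict (Icc a b) := by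
  have : IsFiniteMeasure (μ.restrict (Icc a b)) := isFiniteMeasure_restrict.2 hμb
  refine Measure.ext_of_Iic _ _ fun c => ?_
  have hinter : Iic c ∩ Icc a b = Icc a (min c b) := by
    ext x
    simp only [mem_inter_iff, mem_Iic, mem_Icc, le_min_iff]
    tauto
  rw [Measure.restrict_apply measurableSet_Iic, Measure.restrict_apply measurableSet_Iic, hinter]
  rcases lt_or_ge c a with hc | hc
  · rw [Icc_eq_empty (not_le.2 (min_lt_of_left_lt hc)), measure_empty, measure_empty]
  · exact h _ ⟨le_min hc hab, min_le_right c b⟩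

theorem withDensity_ofReal_apply_Icc {g : ℝ → ℝ} {a b : ℝ} (hab : a ≤ b)
    (hg : ContinuousOn g (Icc a b)) (hg0 : ∀ x ∈ Icc a b, 0 ≤ g x) :
    volume.withDensity (fun x => ENNReal.ofReal (g x)) (Icc a b)
      = ENNReal.ofReal (∫ x in a..b, g x) := by
  rw [withDensity_apply _ measurableSet_Icc, integral_of_le hab, ← integral_Icc_eq_integral_Ioc,
    ofReal_integral_eq_lintegral_ofReal (hg.integrableOn_compact isCompact_Icc)
      ((ae_restrict_iff' measurableSet_Icc).2 (ae_of_all _ hg0))]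

theorem setIntegral_Icc_eq_integral_mul_of_measure_Icc {μ : Measure ℝ} {g : ℝ → ℝ} {a b : ℝ}
    (hab : a ≤ b) (hg : ContinuousOn g (Icc a b)) (hg0 : ∀ x ∈ Icc a b, 0 ≤ g x)
    (hμ : ∀ m ∈ Icc a b, μ (Icc a m) = ENNReal.ofReal (∫ x in a..m, g x)) (φ : ℝ → ℝ) :
    ∫ x in Icc a b, φ x ∂μ = ∫ x in a..b, g x * φ x := by
  have hμ_eq : μ.restrict (Icc a b)
      = (volume.withDensity fun x => ENNReal.ofReal (g x)).restrict (Icc a b) := by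
    refine Measure.restrict_Icc_eq_of_measure_Icc_eq hab (by simp [hμ b ⟨hab, le_rfl⟩])
      fun m hm => ?_
    have hsub : Icc a m ⊆ Icc a b := Icc_subset_Icc_right hm.2
    rw [hμ m hm, withDensity_ofReal_apply_Icc hm.1 (hg.mono hsub) fun x hx => hg0 x (hsub hx)]
  rw [hμ_eq, setIntegral_withDensity_eq_setIntegral_toReal_smul₀
      (hg.aemeasurable measurableSet_Icc).ennreal_ofReal
      (ae_of_all _ fun _ => ENNReal.ofReal_lt_top) _ measurableSet_Icc,
    integral_of_le hab, ← integral_Icc_eq_integral_Ioc]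
  refine setIntegral_congr_fun measurableSet_Icc fun x hx => ?_
  rw [ENNReal.toReal_ofReal (hg0 x hx), smul_eq_mul]

theorem mul_eq_add_integral_of_eq_sub_integral {a s y : ℝ} {β X Y f g : ℝ → ℝ} (has : a ≤ s)
    (hβ : ContinuousOn β (Icc a s)) (hf : ContinuousOn f (Icc a s)) (hg : ContinuousOn g (Icc a s))
    (hfg : ∀ r ∈ Icc a s, f r * Y r = X r * g r)
    (hX : ∀ r ∈ Icc a s, X r = β r - ∫ u in a..r, f u)
    (hY : ∀ r ∈ Icc a s, Y r = y + ∫ u in a..r, g u) :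
    X s * Y s = y * β s + ∫ r in a..s, g r * (β s - β r) := by
  have hβg : ∫ r in a..s, β r * g r = (∫ r in a..s, f r) * Y s := by
    rw [← sub_zero ((∫ r in a..s, f r) * Y s), ← zero_mul y,
      ← integral_mul_add_mul_eq_of_eq_add_integral has hf hg (fun _ _ => (zero_add _).symm) hY]
    refine integral_congr fun r hr => ?_
    rw [uIcc_of_le has] at hr
    rw [hfg r hr, show ∫ u in a..r, f u = β r - X r by linarith [hX r hr]]
    ring
  have hsplit : ∫ r in a..s, g r * (β s - β r)
      = β s * (∫ r in a..s, g r) - ∫ r in a..s, β r * g r := by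
    have hβg_int : IntervalIntegrable (fun r => β r * g r) volume a s :=
      (hβ.mul hg).intervalIntegrable_of_Icc has
    rw [← intervalIntegral.integral_const_mul,
      ← integral_sub ((hg.intervalIntegrable_of_Icc has).const_mul (β s)) hβg_int]
    exact integral_congr fun r _ => by ring
  have hs : s ∈ Icc a s := right_mem_Icc.2 has
  rw [hsplit, hβg]
  linear_combination Y s * hX s hs + β s * hY s hs

theorem reverse_flow_integration_by_parts_general
    (t : ℝ)
    (β : ℝ → ℝ) (hβcont : ContinuousOn β (Icc 0 t))
    (y : ℝ)
    (X Y : ℝ → ℝ)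
    (hXcont : ContinuousOn X (Icc 0 t)) (hYcont : ContinuousOn Y (Icc 0 t))
    (hYpos : ∀ s ∈ Icc (0 : ℝ) t, 0 < Y s)
    (hX : ∀ s ∈ Icc (0 : ℝ) t,
      X s = β s - ∫ r in (0 : ℝ)..s, 2 * X r / (X r ^ 2 + Y r ^ 2))
    (hY : ∀ s ∈ Icc (0 : ℝ) t,
      Y s = y + ∫ r in (0 : ℝ)..s, 2 * Y r / (X r ^ 2 + Y r ^ 2))
    : MonotoneOn Y (Icc (0 : ℝ) t) ∧
      ∀ μ : Measure ℝ,
        (∀ a b : ℝ, a ≤ b → a ∈ Icc (0 : ℝ) t → b ∈ Icc (0 : ℝ) t →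
          μ (Icc a b) = ENNReal.ofReal (Y b - Y a)) →
        ∀ s ∈ Icc (0 : ℝ) t,
          X s * Y s = y * β s + ∫ r in Icc (0 : ℝ) s, (β s - β r) ∂μ := by
  have hcont_div : ∀ Z : ℝ → ℝ, ContinuousOn Z (Icc 0 t) →
      ContinuousOn (fun r => 2 * Z r / (X r ^ 2 + Y r ^ 2)) (Icc 0 t) := fun Z hZ =>
    (continuousOn_const.mul hZ).div ((hXcont.pow 2).add (hYcont.pow 2)) fun r hr => by
      have := hYpos r hr; positivity
  have hg0 : ∀ r ∈ Icc (0 : ℝ) t, 0 ≤ 2 * Y r / (X r ^ 2 + Y r ^ 2) := fun r hr => by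
    have := hYpos r hr; positivity
  refine ⟨monotoneOn_of_eq_add_integral (hcont_div Y hYcont) hg0 hY, fun μ hμ s hs => ?_⟩
  have h0 : (0 : ℝ) ∈ Icc 0 t := ⟨le_rfl, hs.1.trans hs.2⟩
  have hsub : Icc 0 s ⊆ Icc 0 t := Icc_subset_Icc_right hs.2
  have hY0 : Y 0 = y := by simpa using hY 0 h0
  have hμY : ∀ m ∈ Icc 0 s,
      μ (Icc 0 m) = ENNReal.ofReal (∫ r in 0..m, 2 * Y r / (X r ^ 2 + Y r ^ 2)) := fun m hm => by
    rw [hμ 0 m hm.1 h0 (hsub hm), hY m (hsub hm), hY0, add_sub_cancel_left]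
  rw [setIntegral_Icc_eq_integral_mul_of_measure_Icc hs.1 ((hcont_div Y hYcont).mono hsub)
    (fun r hr => hg0 r (hsub hr)) hμY]
  exact mul_eq_add_integral_of_eq_sub_integral hs.1 (hβcont.mono hsub)
    ((hcont_div X hXcont).mono hsub) ((hcont_div Y hYcont).mono hsub) (fun r _ => by ring)
    (fun r hr => hX r (hsub hr)) (fun r hr => hY r (hsub hr))

/-- Integration-by-parts identity for the reverse Loewner flow: `Y` is nondecreasing and
`X(s)·Y(s) = y·β(s) + ∫_{[0,s]} (β(s) − β(r)) dμ_Y(r)`, where `μ_Y` is the Lebesgue–Stieltjes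
measure of `Y` (any Borel measure `μ` with `μ(Icc a b) = Y(b) − Y(a)` for `a ≤ b` in `[0,t]`). -/
theorem reverse_flow_integration_by_parts
    (σ t : ℝ) (hσ0 : 0 < σ) (ht : 0 < t)
    (β : ℝ → ℝ) (hβcont : ContinuousOn β (Icc 0 t)) (hβ0 : β 0 = 0)
    (hβlip : ∀ r ∈ Icc (0 : ℝ) t, ∀ s ∈ Icc (0 : ℝ) t, |β s - β r| ≤ σ * Real.sqrt |s - r|)
    (y : ℝ) (hy : 0 < y)
    (X Y : ℝ → ℝ)
    (hXcont : ContinuousOn X (Icc 0 t)) (hYcont : ContinuousOn Y (Icc 0 t))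
    (hYpos : ∀ s ∈ Icc (0 : ℝ) t, 0 < Y s)
    (hX : ∀ s ∈ Icc (0 : ℝ) t,
      X s = β s - ∫ r in (0 : ℝ)..s, 2 * X r / (X r ^ 2 + Y r ^ 2))
    (hY : ∀ s ∈ Icc (0 : ℝ) t,
      Y s = y + ∫ r in (0 : ℝ)..s, 2 * Y r / (X r ^ 2 + Y r ^ 2))
    : MonotoneOn Y (Icc (0 : ℝ) t) ∧
      ∀ μ : Measure ℝ,
        (∀ a b : ℝ, a ≤ b → a ∈ Icc (0 : ℝ) t → b ∈ Icc (0 : ℝ) t →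
          μ (Icc a b) = ENNReal.ofReal (Y b - Y a)) →
        ∀ s ∈ Icc (0 : ℝ) t,
          X s * Y s = y * β s + ∫ r in Icc (0 : ℝ) s, (β s - β r) ∂μ :=
  reverse_flow_integration_by_parts_general t β hβcont y X Y hXcont hYcont hYpos hX hY
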